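/- In the field ℚ(x_1,x_2) of rational functions in two variables over ℚ, the following identity holds: (x_1 − x_2) · 1/((1−x_1)^2(1−x_2)^2(1−x_1^2)(1−x_2^2)(1−x_1x_2)^2(1−x_1^2x_2)(1−x_1x_2^2)) = x_1·h(x_1, x_1x_2) − x_2·h(x_2, x_1x_2), where h(v_1,v_2) = (v_1^3 h_3(v_2) + v_1^2 h_2(v_2) + v_1 h_1(v_2) + h_0(v_2)) / ((1−v_1)^3(1+v_1)(1−v_1v_2)(1−v_2)^7(1+v_2)^4(1+v_2^2)), with h_3(v_2) = v_2^2(v_2^4 − v_2^3 + 3v_2^2 − v_2 + 1), h_2(v_2) = v_2(2v_2^4 − 4v_2^3 + v_2^2 − v_2 − 1), h_1(v_2) = v_2(−v_2^4 − v_2^3 + v_2^2 − 4v_2 + 2), h_0(v_2) = v_2^4 − v_2^3 + 3v_2^2 − v_2 + 1. (This expresses that h is the multiplicity series M' of the Hilbert series of the mixed trace algebra T_{32} of two generic 3×3 matrices.) -/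

import Mathlib

/-!
Clearing denominators turns the identity into a polynomial identity in `x₁, x₂`, so it holds at
any two elements of a field at which all the denominators are nonzero. At the generators
`x₁ = X 0`, `x₂ = X 1` every denominator factor is a polynomial with constant term `1`.
-/

/-- The candidate multiplicity series `M'(H(T₃₂); v₁, v₂)` of the Hilbert series of
the mixed trace algebra of two generic `3×3` matrices. -/
noncomputable def multSeriesT32 (v1 v2 : FractionRing (MvPolynomial (Fin 2) ℚ)) :
    FractionRing (MvPolynomial (Fin 2) ℚ) :=
  (v1 ^ 3 * (v2 ^ 2 * (v2 ^ 4 - v2 ^ 3 + 3 * v2 ^ 2 - v2 + 1)) +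
      v1 ^ 2 * (v2 * (2 * v2 ^ 4 - 4 * v2 ^ 3 + v2 ^ 2 - v2 - 1)) +
      v1 * (v2 * (-v2 ^ 4 - v2 ^ 3 + v2 ^ 2 - 4 * v2 + 2)) +
      (v2 ^ 4 - v2 ^ 3 + 3 * v2 ^ 2 - v2 + 1)) /
    ((1 - v1) ^ 3 * (1 + v1) * (1 - v1 * v2) * (1 - v2) ^ 7 * (1 + v2) ^ 4 *
      (1 + v2 ^ 2))

open MvPolynomial

theorem MvPolynomial.algebraMap_ne_zero_of_constantCoeff_ne_zero {σ R K : Type*} [CommRing R]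
    [CommRing K] [Algebra (MvPolynomial σ R) K] [IsFractionRing (MvPolynomial σ R) K]
    {p : MvPolynomial σ R} (h : constantCoeff p ≠ 0) : algebraMap (MvPolynomial σ R) K p ≠ 0 :=
  fun h0 => h (by rw [IsFractionRing.to_map_eq_zero_iff.1 h0, map_zero])

theorem multSeriesT32_identity {x1 x2 : FractionRing (MvPolynomial (Fin 2) ℚ)}
    (h1 : 1 - x1 ≠ 0) (h2 : 1 + x1 ≠ 0) (h3 : 1 - x2 ≠ 0) (h4 : 1 + x2 ≠ 0)
    (h5 : 1 - x1 * x2 ≠ 0) (h6 : 1 + x1 * x2 ≠ 0) (h7 : 1 - x1 ^ 2 * x2 ≠ 0)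
    (h8 : 1 - x1 * x2 ^ 2 ≠ 0) (h9 : 1 + x1 ^ 2 * x2 ^ 2 ≠ 0) :
    (x1 - x2) *
        (1 / ((1 - x1) ^ 2 * (1 - x2) ^ 2 * (1 - x1 ^ 2) * (1 - x2 ^ 2) *
          (1 - x1 * x2) ^ 2 * (1 - x1 ^ 2 * x2) * (1 - x1 * x2 ^ 2))) =
      x1 * multSeriesT32 x1 (x1 * x2) - x2 * multSeriesT32 x2 (x1 * x2) := by
  rw [multSeriesT32, multSeriesT32, show 1 - x1 ^ 2 = (1 - x1) * (1 + x1) by ring,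
    show 1 - x2 ^ 2 = (1 - x2) * (1 + x2) by ring]
  field_simp
  ring

/-- In `ℚ(x₁,x₂)` one has
`(x₁−x₂)/((1−x₁)²(1−x₂)²(1−x₁²)(1−x₂²)(1−x₁x₂)²(1−x₁²x₂)(1−x₁x₂²)) =
  x₁·h(x₁,x₁x₂) − x₂·h(x₂,x₁x₂)`
where `h = multSeriesT32` is the multiplicity series of the Hilbert series of the
mixed trace algebra `T₃₂` of two generic `3×3` matrices. -/
theorem multiplicity_series_T32
    (x1 x2 : FractionRing (MvPolynomial (Fin 2) ℚ))
    (hx1 : x1 = algebraMap (MvPolynomial (Fin 2) ℚ) _ (MvPolynomial.X 0))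
    (hx2 : x2 = algebraMap (MvPolynomial (Fin 2) ℚ) _ (MvPolynomial.X 1)) :
    (x1 - x2) *
        (1 / ((1 - x1) ^ 2 * (1 - x2) ^ 2 * (1 - x1 ^ 2) * (1 - x2 ^ 2) *
          (1 - x1 * x2) ^ 2 * (1 - x1 ^ 2 * x2) * (1 - x1 * x2 ^ 2))) =
      x1 * multSeriesT32 x1 (x1 * x2) - x2 * multSeriesT32 x2 (x1 * x2) := by
  subst hx1 hx2
  apply multSeriesT32_identity <;>
    simp only [← map_one (algebraMap (MvPolynomial (Fin 2) ℚ)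
      (FractionRing (MvPolynomial (Fin 2) ℚ))), ← map_sub, ← map_add, ← map_mul, ← map_pow] <;>
    exact algebraMap_ne_zero_of_constantCoeff_ne_zero (by simp)
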